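/- For every n, m, ε (with 0 < ε/√n ≤ 1) and every deterministic non-adaptive SSSQ algorithm (g, T), there exists a deterministic non-adaptive SSEQ algorithm (h, ℓ) whose query complexity equals that of (g, T), i.e., ‖ℓ‖₁ = Σ_{i=1}^d |T_i|, and whose advantage is at least the advantage of (g, T). -/
import Mathlib


open Finset

/-- Probability that the SSSQ oracle, on hidden set `A ⊆ [m]` and set queries
`T = (T_1, …, T_d)`, returns the response `v` (where `v i j` is only meaningful — and
forced to be `false` — when `j ∉ T i`; for `j ∈ T i` the bit is `0` if `j ∉ A`, and is
`1` with probability `ρ` if `j ∈ A`, all bits independent). -/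
noncomputable def sssqRespP {m d : ℕ} (T : Fin d → Finset (Fin m)) (ρ : ℝ)
    (A : Finset (Fin m)) (v : Fin d → Fin m → Bool) : ℝ :=
  ∏ i : Fin d, ∏ j : Fin m,
    if j ∈ T i then
      (if j ∈ A then (if v i j then ρ else 1 - ρ) else (if v i j then 0 else 1))
    else (if v i j then 0 else 1)

/-- Probability that the deterministic non-adaptive SSSQ algorithm `(g, T)` answers
"yes" (`true`) when the hidden set `A ⊆ [m]` is drawn by including each element of `[m]`
independently with probability `pr`, and each response bit for `j ∈ T i ∩ A` is `1`
with probability `ρ`. -/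
noncomputable def sssqYesP (m d : ℕ) (T : Fin d → Finset (Fin m)) (ρ pr : ℝ)
    (g : (Fin d → Fin m → Bool) → Bool) : ℝ :=
  ∑ A : Finset (Fin m), (pr ^ A.card * (1 - pr) ^ (m - A.card)) *
    ∑ v : Fin d → Fin m → Bool,
      (if g v then 1 else 0) * sssqRespP T ρ A v

/-- The advantage of the SSSQ algorithm `(g, T)` with parameters `n`, `m`, `ε`:
the probability it answers "yes" under `A ∼ A_yes` (rate `1/2`) minus the probability
it answers "yes" under `A ∼ A_no` (rate `1/2 + (log₂ n)/√n`); response bits for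
elements of `A` are `1` with probability `ε/√n`. -/
noncomputable def sssqAdv (n m d : ℕ) (T : Fin d → Finset (Fin m)) (ε : ℝ)
    (g : (Fin d → Fin m → Bool) → Bool) : ℝ :=
  sssqYesP m d T (ε / Real.sqrt n) (1 / 2) g -
    sssqYesP m d T (ε / Real.sqrt n) (1 / 2 + Real.logb 2 n / Real.sqrt n) g

/-- Probability that the SSEQ oracle, on hidden set `A ⊆ [m]` and element queries
`ℓ = (ℓ_1, …, ℓ_m)`, returns the response `b ∈ {0,1}^m`: entries are independent,
`b_i = 0` if `i ∉ A`, and `b_i = 1` with probability `λ(ℓ_i) = 1 - (1 - ρ)^{ℓ_i}`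
if `i ∈ A`. -/
noncomputable def sseqRespP {m : ℕ} (ℓ : Fin m → ℕ) (ρ : ℝ)
    (A : Finset (Fin m)) (b : Fin m → Bool) : ℝ :=
  ∏ i : Fin m,
    if i ∈ A then (if b i then 1 - (1 - ρ) ^ (ℓ i) else (1 - ρ) ^ (ℓ i))
    else (if b i then 0 else 1)

/-- Probability that the deterministic non-adaptive SSEQ algorithm `(h, ℓ)` answers
"yes" (`true`) when the hidden set `A ⊆ [m]` is drawn by including each element of `[m]`
independently with probability `pr`. -/
noncomputable def sseqYesP (m : ℕ) (ℓ : Fin m → ℕ) (ρ pr : ℝ)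
    (h : (Fin m → Bool) → Bool) : ℝ :=
  ∑ A : Finset (Fin m), (pr ^ A.card * (1 - pr) ^ (m - A.card)) *
    ∑ b : Fin m → Bool, (if h b then 1 else 0) * sseqRespP ℓ ρ A b

/-- The advantage of the SSEQ algorithm `(h, ℓ)` with parameters `n`, `m`, `ε`. -/
noncomputable def sseqAdv (n m : ℕ) (ℓ : Fin m → ℕ) (ε : ℝ)
    (h : (Fin m → Bool) → Bool) : ℝ :=
  sseqYesP m ℓ (ε / Real.sqrt n) (1 / 2) h -
    sseqYesP m ℓ (ε / Real.sqrt n) (1 / 2 + Real.logb 2 n / Real.sqrt n) h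

section Aux

variable {m d : ℕ}

/-- per-element query count -/
def ℓT (T : Fin d → Finset (Fin m)) (j : Fin m) : ℕ :=
  ∑ i : Fin d, if j ∈ T i then 1 else 0

noncomputable def wjF (T : Fin d → Finset (Fin m)) (ρ : ℝ) (j : Fin m) (i : Fin d) (x : Bool) : ℝ :=
  if j ∈ T i then (if x then ρ else 1 - ρ) else (if x then 0 else 1)

noncomputable def KjF (T : Fin d → Finset (Fin m)) (ρ : ℝ) (j : Fin m) (bj : Bool)
    (u : Fin d → Bool) : ℝ :=
  if bj then
    (if ∃ i, u i = true then (∏ i, wjF T ρ j i (u i)) / (1 - (1 - ρ) ^ (ℓT T j)) else 0)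
  else (if ∀ i, u i = false then 1 else 0)

noncomputable def KkF (T : Fin d → Finset (Fin m)) (ρ : ℝ) (b : Fin m → Bool)
    (w : Fin m → Fin d → Bool) : ℝ :=
  ∏ j, KjF T ρ j (b j) (w j)

lemma prod_ind (u : Fin d → Bool) :
    (∏ i, (if u i then (0:ℝ) else 1)) = if ∀ i, u i = false then 1 else 0 := by
  by_cases h : ∀ i, u i = false
  · rw [if_pos h]
    exact Finset.prod_eq_one fun i _ => by simp [h i]
  · rw [if_neg h]
    push_neg at h
    obtain ⟨i, hi⟩ := h
    exact Finset.prod_eq_zero (mem_univ i) (by rw [if_pos (Bool.ne_false_iff.mp hi)])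

lemma prod_wj_false (T : Fin d → Finset (Fin m)) (ρ : ℝ) (j : Fin m) :
    ∏ i : Fin d, wjF T ρ j i false = (1 - ρ) ^ (ℓT T j) := by
  unfold wjF ℓT
  rw [← Finset.prod_pow_eq_pow_sum]
  exact Finset.prod_congr rfl fun i _ => by by_cases h : j ∈ T i <;> simp [h]

lemma wj_nonneg {T : Fin d → Finset (Fin m)} {ρ : ℝ} (h0 : 0 ≤ ρ) (h1 : ρ ≤ 1)
    (j : Fin m) (i : Fin d) (x : Bool) : 0 ≤ wjF T ρ j i x := by
  unfold wjF; split_ifs <;> linarith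

lemma Kj_nonneg {T : Fin d → Finset (Fin m)} {ρ : ℝ} (h0 : 0 ≤ ρ) (h1 : ρ ≤ 1)
    (j : Fin m) (bj : Bool) (u : Fin d → Bool) : 0 ≤ KjF T ρ j bj u := by
  unfold KjF
  have hd : (0:ℝ) ≤ 1 - (1 - ρ) ^ (ℓT T j) := by
    have := pow_le_one₀ (by linarith : (0:ℝ) ≤ 1 - ρ) (by linarith : (1:ℝ) - ρ ≤ 1) (n := ℓT T j)
    linarith
  split_ifs <;> first
    | exact le_refl _
    | exact div_nonneg (Finset.prod_nonneg fun i _ => wj_nonneg h0 h1 j i (u i)) hd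
    | norm_num

lemma Kk_nonneg {T : Fin d → Finset (Fin m)} {ρ : ℝ} (h0 : 0 ≤ ρ) (h1 : ρ ≤ 1)
    (b : Fin m → Bool) (w : Fin m → Fin d → Bool) : 0 ≤ KkF T ρ b w :=
  Finset.prod_nonneg fun j _ => Kj_nonneg h0 h1 j (b j) (w j)

lemma key1 (T : Fin d → Finset (Fin m)) (ρ : ℝ) (h0 : 0 < ρ) (h1 : ρ ≤ 1)
    (A : Finset (Fin m)) (j : Fin m) (u : Fin d → Bool) :
    ∑ bj : Bool, (if j ∈ A then (if bj then 1 - (1 - ρ) ^ (ℓT T j) else (1 - ρ) ^ (ℓT T j))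
        else (if bj then 0 else 1)) * KjF T ρ j bj u
      = if j ∈ A then ∏ i, wjF T ρ j i (u i) else (if ∀ i, u i = false then 1 else 0) := by
  rw [Fintype.sum_bool]
  by_cases hA : j ∈ A
  · simp only [if_pos hA]
    unfold KjF
    simp only [if_true, Bool.false_eq_true, if_false]
    by_cases hex : ∃ i, u i = true
    · have hall : ¬ ∀ i, u i = false := by
        obtain ⟨i, hi⟩ := hex
        intro h; rw [h i] at hi; exact Bool.false_ne_true hi
      rw [if_pos hex, if_neg hall, mul_zero, add_zero]
      by_cases hl : ℓT T j = 0
      · obtain ⟨i0, hi0⟩ := hex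
        have hnot : j ∉ T i0 := by
          intro hmem
          have h1' : 1 ≤ ℓT T j := by
            unfold ℓT
            calc 1 = (if j ∈ T i0 then 1 else 0) := by simp [hmem]
            _ ≤ _ := Finset.single_le_sum (f := fun i => if j ∈ T i then 1 else 0)
                (fun i _ => by positivity) (mem_univ i0)
          omega
        have hz : ∏ i, wjF T ρ j i (u i) = 0 :=
          Finset.prod_eq_zero (mem_univ i0) (by unfold wjF; rw [if_neg hnot, if_pos hi0])
        rw [hz, zero_div, mul_zero]
      · have hlt : (1 - ρ) ^ (ℓT T j) < 1 :=
          pow_lt_one₀ (by linarith) (by linarith) hl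
        rw [mul_comm, div_mul_cancel₀ _ (by linarith : (1:ℝ) - (1 - ρ) ^ (ℓT T j) ≠ 0)]
    · have hall : ∀ i, u i = false := by
        intro i
        cases h' : u i
        · rfl
        · exact absurd ⟨i, h'⟩ hex
      rw [if_neg hex, if_pos hall, mul_zero, mul_one, zero_add]
      rw [Finset.prod_congr rfl fun i _ => by rw [hall i], prod_wj_false]
  · simp only [if_neg hA]
    unfold KjF
    simp

lemma key2 (T : Fin d → Finset (Fin m)) (ρ : ℝ) (h0 : 0 < ρ) (h1 : ρ ≤ 1)
    (A : Finset (Fin m)) (w : Fin m → Fin d → Bool) :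
    ∑ b : Fin m → Bool, sseqRespP (ℓT T) ρ A b * KkF T ρ b w
      = sssqRespP T ρ A (fun i j => w j i) := by
  unfold sseqRespP KkF
  simp_rw [← Finset.prod_mul_distrib]
  rw [← Fintype.prod_sum (fun (j : Fin m) (bj : Bool) =>
    (if j ∈ A then (if bj then 1 - (1 - ρ) ^ (ℓT T j) else (1 - ρ) ^ (ℓT T j))
      else (if bj then 0 else 1)) * KjF T ρ j bj (w j))]
  rw [sssqRespP, Finset.prod_comm]
  refine Finset.prod_congr rfl fun j _ => ?_
  rw [key1 T ρ h0 h1 A j (w j)]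
  by_cases hA : j ∈ A
  · rw [if_pos hA]
    refine Finset.prod_congr rfl fun i _ => ?_
    unfold wjF
    by_cases h : j ∈ T i <;> simp [h, hA]
  · rw [if_neg hA, ← prod_ind (fun i => w j i)]
    refine Finset.prod_congr rfl fun i _ => ?_
    by_cases h : j ∈ T i <;> simp [h, hA]

lemma sum_KjF_le_one {T : Fin d → Finset (Fin m)} {ρ : ℝ} (h0 : 0 < ρ) (h1 : ρ ≤ 1)
    (j : Fin m) (bj : Bool) : ∑ u : Fin d → Bool, KjF T ρ j bj u ≤ 1 := by
  cases bj
  · unfold KjF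
    simp only [Bool.false_eq_true, if_false]
    have hc : ∀ u : Fin d → Bool,
        (if ∀ i, u i = false then (1:ℝ) else 0) = (if u = (fun _ => false) then (1:ℝ) else 0) := by
      intro u
      congr 1
      simp only [eq_iff_iff]
      constructor
      · intro h; funext i; exact h i
      · intro h i; rw [h]
    simp_rw [hc]
    rw [Finset.sum_ite_eq' univ (fun _ => false) (fun _ => (1:ℝ))]
    simp
  · unfold KjF
    simp only [if_true]
    have hrw : ∀ u : Fin d → Bool,
        (if ∃ i, u i = true then (∏ i, wjF T ρ j i (u i)) / (1 - (1 - ρ) ^ (ℓT T j)) else 0)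
          = (if ∃ i, u i = true then (∏ i, wjF T ρ j i (u i)) else 0) / (1 - (1 - ρ) ^ (ℓT T j)) := by
      intro u; split_ifs
      · rfl
      · rw [zero_div]
    simp_rw [hrw, ← Finset.sum_div]
    have h2 : ∑ u : Fin d → Bool, (if ∃ i, u i = true then (∏ i, wjF T ρ j i (u i)) else 0)
        = 1 - (1 - ρ) ^ (ℓT T j) := by
      have hsplit : ∀ u : Fin d → Bool,
          (if ∃ i, u i = true then (∏ i, wjF T ρ j i (u i)) else 0)
            = (∏ i, wjF T ρ j i (u i))
              - (if u = (fun _ => false) then ∏ i, wjF T ρ j i (u i) else 0) := by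
        intro u
        by_cases h : ∃ i, u i = true
        · rw [if_pos h, if_neg, sub_zero]
          rintro rfl
          obtain ⟨i, hi⟩ := h
          simp at hi
        · rw [if_neg h]
          have : u = (fun _ => false) := by
            funext i
            rcases h' : u i with _|_
            · rfl
            · exact absurd ⟨i, h'⟩ h
          rw [if_pos this, sub_self]
      simp_rw [hsplit]
      rw [Finset.sum_sub_distrib]
      have hsum1 : ∑ u : Fin d → Bool, ∏ i, wjF T ρ j i (u i) = 1 := by
        rw [← Fintype.prod_sum (fun (i : Fin d) (x : Bool) => wjF T ρ j i x)]
        refine Finset.prod_eq_one fun i _ => ?_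
        rw [Fintype.sum_bool]
        unfold wjF
        by_cases h : j ∈ T i <;> simp [h]
      have hsum2 : ∑ u : Fin d → Bool,
          (if u = (fun _ => false) then ∏ i, wjF T ρ j i (u i) else 0)
            = (1 - ρ) ^ (ℓT T j) := by
        rw [Finset.sum_ite_eq' univ (fun _ => false) (fun u => ∏ i, wjF T ρ j i (u i))]
        simp [prod_wj_false]
      rw [hsum1, hsum2]
    rw [h2]
    rcases eq_or_ne ((1:ℝ) - (1 - ρ) ^ (ℓT T j)) 0 with h | h
    · simp [h]
    · rw [div_self h]

lemma sum_KkF_le_one {T : Fin d → Finset (Fin m)} {ρ : ℝ} (h0 : 0 < ρ) (h1 : ρ ≤ 1)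
    (b : Fin m → Bool) : ∑ w : Fin m → Fin d → Bool, KkF T ρ b w ≤ 1 := by
  unfold KkF
  rw [← Fintype.prod_sum (fun (j : Fin m) (u : Fin d → Bool) => KjF T ρ j (b j) u)]
  refine Finset.prod_le_one (fun j _ => ?_) (fun j _ => sum_KjF_le_one h0 h1 j (b j))
  exact Finset.sum_nonneg fun u _ => Kj_nonneg h0.le h1 j (b j) u

lemma sum3_comm {α β γ : Type*} [Fintype α] [Fintype β] [Fintype γ] (f : α → β → γ → ℝ) :
    ∑ a : α, ∑ b : β, ∑ c : γ, f a b c = ∑ c : γ, ∑ a : α, ∑ b : β, f a b c := by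
  calc ∑ a : α, ∑ b : β, ∑ c : γ, f a b c
      = ∑ a : α, ∑ c : γ, ∑ b : β, f a b c :=
        Finset.sum_congr rfl fun a _ => Finset.sum_comm
    _ = ∑ c : γ, ∑ a : α, ∑ b : β, f a b c := Finset.sum_comm

end Aux

lemma sssqYes_eq {m d : ℕ} (T : Fin d → Finset (Fin m)) (ρ : ℝ) (h0 : 0 < ρ) (h1 : ρ ≤ 1)
    (pr : ℝ) (g : (Fin d → Fin m → Bool) → Bool) :
    sssqYesP m d T ρ pr g = ∑ b : Fin m → Bool,
      (∑ A : Finset (Fin m), (pr ^ A.card * (1 - pr) ^ (m - A.card)) * sseqRespP (ℓT T) ρ A b) *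
      (∑ v : Fin d → Fin m → Bool, (if g v then 1 else 0) * KkF T ρ b (fun j i => v i j)) := by
  unfold sssqYesP
  have hrepl : ∀ (A : Finset (Fin m)) (v : Fin d → Fin m → Bool),
      sssqRespP T ρ A v
        = ∑ b : Fin m → Bool, sseqRespP (ℓT T) ρ A b * KkF T ρ b (fun j i => v i j) :=
    fun A v => (key2 T ρ h0 h1 A (fun j i => v i j)).symm
  simp_rw [hrepl, Finset.mul_sum, Finset.sum_mul]
  rw [sum3_comm]
  refine Finset.sum_congr rfl fun b _ => ?_
  rw [Finset.sum_comm]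
  exact Finset.sum_congr rfl fun v _ => Finset.sum_congr rfl fun A _ => by ring

lemma sseqYes_eq {m : ℕ} (ℓ : Fin m → ℕ) (ρ pr : ℝ) (h : (Fin m → Bool) → Bool) :
    sseqYesP m ℓ ρ pr h = ∑ b : Fin m → Bool,
      (∑ A : Finset (Fin m), (pr ^ A.card * (1 - pr) ^ (m - A.card)) * sseqRespP ℓ ρ A b) *
      (if h b then 1 else 0) := by
  unfold sseqYesP
  simp_rw [Finset.mul_sum, Finset.sum_mul]
  rw [Finset.sum_comm]
  exact Finset.sum_congr rfl fun b _ => Finset.sum_congr rfl fun A _ => by ring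

lemma final_ineq (x y gg : ℝ) (bb : Bool) (hb : bb = true ↔ 0 < x - y)
    (hg0 : 0 ≤ gg) (hg1 : gg ≤ 1) :
    x * gg - y * gg ≤ x * (if bb then 1 else 0) - y * (if bb then 1 else 0) := by
  by_cases hxy : 0 < x - y
  · rw [if_pos (hb.mpr hxy)]
    nlinarith
  · rw [if_neg (fun hbb => hxy (hb.mp hbb))]
    nlinarith


theorem stmt11 (n m : ℕ) (ε : ℝ)
    (hρ₀ : 0 < ε / Real.sqrt n) (hρ₁ : ε / Real.sqrt n ≤ 1)
    (d : ℕ) (T : Fin d → Finset (Fin m)) (g : (Fin d → Fin m → Bool) → Bool) :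
    ∃ (ℓ : Fin m → ℕ) (h : (Fin m → Bool) → Bool),
      (∑ i : Fin m, ℓ i) = (∑ i : Fin d, (T i).card) ∧
      sssqAdv n m d T ε g ≤ sseqAdv n m ℓ ε h := by
  classical
  refine ⟨ℓT T, fun b => decide (0 <
      (∑ A : Finset (Fin m),
        (((1:ℝ) / 2) ^ A.card * (1 - (1:ℝ) / 2) ^ (m - A.card)) *
          sseqRespP (ℓT T) (ε / Real.sqrt n) A b) -
      (∑ A : Finset (Fin m),
        (((1:ℝ) / 2 + Real.logb 2 n / Real.sqrt n) ^ A.card *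
            (1 - ((1:ℝ) / 2 + Real.logb 2 n / Real.sqrt n)) ^ (m - A.card)) *
          sseqRespP (ℓT T) (ε / Real.sqrt n) A b)), ?_, ?_⟩
  · unfold ℓT
    rw [Finset.sum_comm]
    exact Finset.sum_congr rfl fun i _ => by simp [Finset.sum_ite_mem]
  · have hG0 : ∀ b : Fin m → Bool, 0 ≤ ∑ v : Fin d → Fin m → Bool,
        (if g v then (1:ℝ) else 0) * KkF T (ε / Real.sqrt n) b (fun j i => v i j) :=
      fun b => Finset.sum_nonneg fun v _ =>
        mul_nonneg (by split_ifs <;> norm_num) (Kk_nonneg hρ₀.le hρ₁ b _)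
    have hG1 : ∀ b : Fin m → Bool, (∑ v : Fin d → Fin m → Bool,
        (if g v then (1:ℝ) else 0) * KkF T (ε / Real.sqrt n) b (fun j i => v i j)) ≤ 1 := by
      intro b
      have step1 : (∑ v : Fin d → Fin m → Bool,
          (if g v then (1:ℝ) else 0) * KkF T (ε / Real.sqrt n) b (fun j i => v i j))
            ≤ ∑ v : Fin d → Fin m → Bool, KkF T (ε / Real.sqrt n) b (fun j i => v i j) :=
        Finset.sum_le_sum fun v _ => by
          rcases hgv : g v with _ | _ <;>
            simp [hgv, Kk_nonneg hρ₀.le hρ₁ b (fun j i => v i j)]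
      have step2 : (∑ v : Fin d → Fin m → Bool, KkF T (ε / Real.sqrt n) b (fun j i => v i j))
          = ∑ w : Fin m → Fin d → Bool, KkF T (ε / Real.sqrt n) b w :=
        Fintype.sum_equiv
          ⟨fun (v : Fin d → Fin m → Bool) => fun j i => v i j,
            fun w i j => w j i, fun _ => rfl, fun _ => rfl⟩ _ _ (fun v => rfl)
      calc (∑ v : Fin d → Fin m → Bool,
          (if g v then (1:ℝ) else 0) * KkF T (ε / Real.sqrt n) b (fun j i => v i j))
          ≤ _ := step1
        _ = _ := step2
        _ ≤ 1 := sum_KkF_le_one hρ₀ hρ₁ b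
    unfold sssqAdv sseqAdv
    rw [sssqYes_eq T (ε / Real.sqrt n) hρ₀ hρ₁ (1 / 2) g,
        sssqYes_eq T (ε / Real.sqrt n) hρ₀ hρ₁ (1 / 2 + Real.logb 2 n / Real.sqrt n) g,
        sseqYes_eq (ℓT T) (ε / Real.sqrt n) (1 / 2) _,
        sseqYes_eq (ℓT T) (ε / Real.sqrt n) (1 / 2 + Real.logb 2 n / Real.sqrt n) _]
    rw [← Finset.sum_sub_distrib, ← Finset.sum_sub_distrib]
    refine Finset.sum_le_sum fun b _ => ?_
    exact final_ineq _ _ _ _ (by simp) (hG0 b) (hG1 b)
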